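/- Let W₁,…,Wₙ ∈ R^{D×d} be independent random matrices whose entries are i.i.d. with mean 0 and variance 1. Define φₙ(x) = (W₁x ⊙ ⋯ ⊙ Wₙx)/√D, where ⊙ is the entrywise product. Then for all x, y ∈ R^d, E[φₙ(x)ᵀφₙ(y)] = (⟨x,y⟩)ⁿ. -/

import Mathlib

/-!
Write `w = Wᵢ[j]` for the `j`-th row of `Wᵢ`. Its entries are centred, of unit variance and
independent, hence orthonormal in `L²`, so `E[(w ⬝ x)(w ⬝ y)] = x ⬝ y`. The rows `W₁[j], …, Wₙ[j]`
are independent, so the expectation of the `j`-th summand `∏ᵢ (Wᵢ[j] ⬝ x)(Wᵢ[j] ⬝ y)` factors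
into `(x ⬝ y)ⁿ`; averaging over the `D` coordinates gives the claim.
-/

open MeasureTheory ProbabilityTheory Finset Matrix

namespace ProbabilityTheory

variable {Ω : Type*} [MeasurableSpace Ω] {μ : Measure Ω}

/-- Converse of `iIndepFun_uncurry'`. -/
theorem iIndepFun.curry {ι κ 𝓧 : Type*} [MeasurableSpace 𝓧] {X : ι → κ → Ω → 𝓧}
    (mX : ∀ i j, Measurable (X i j)) (h : iIndepFun (fun p : ι × κ => X p.1 p.2) μ) :
    iIndepFun (fun i ω j => X i j ω) μ := by
  have := h.isProbabilityMeasure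
  have := fun i j => Measure.isProbabilityMeasure_map (μ := μ) (mX i j).aemeasurable
  have hrow (i : ι) : μ.map (fun ω j => X i j ω) = Measure.infinitePi fun j => μ.map (X i j) :=
    (h.precomp (Prod.mk_right_injective i)).map_fun_eq_infinitePi_map (mX i)
  rw [iIndepFun_iff_map_fun_eq_infinitePi_map (fun i => measurable_pi_iff.2 (mX i))]
  calc μ.map (fun ω i j => X i j ω)
      = (μ.map fun ω (p : ι × κ) => X p.1 p.2 ω).map (MeasurableEquiv.curry ι κ 𝓧) := by
        rw [Measure.map_map (MeasurableEquiv.measurable _) (by fun_prop)]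
        rfl
    _ = Measure.infinitePi fun i => Measure.infinitePi fun j => μ.map (X i j) := by
        rw [h.map_fun_eq_infinitePi_map fun p : ι × κ => mX p.1 p.2,
          Measure.infinitePi_map_curry fun i j => μ.map (X i j)]
    _ = Measure.infinitePi fun i => μ.map (fun ω j => X i j ω) := by simp_rw [hrow]

theorem iIndepFun.integrable_finsetProd {ι : Type*} {X : ι → Ω → ℝ} (hX : iIndepFun X μ)
    (mX : ∀ i, Measurable (X i)) (hint : ∀ i, Integrable (X i) μ) (s : Finset ι) :
    Integrable (∏ i ∈ s, X i) μ := by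
  have := hX.isProbabilityMeasure
  classical
  induction s using Finset.induction_on with
  | empty => exact integrable_const 1
  | insert a s ha ih =>
    rw [prod_insert ha, mul_comm]
    exact (hX.indepFun_finsetProd_of_notMem mX ha).integrable_mul ih (hint a)

theorem integral_mul_eq_ite_of_indepFun {κ : Type*} [DecidableEq κ] {X : κ → Ω → ℝ}
    (hindep : Pairwise fun k k' => IndepFun (X k) (X k') μ)
    (mX : ∀ k, AEStronglyMeasurable (X k) μ) (hmean : ∀ k, ∫ ω, X k ω ∂μ = 0)
    (hvar : ∀ k, ∫ ω, X k ω ^ 2 ∂μ = 1) (k k' : κ) :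
    ∫ ω, X k ω * X k' ω ∂μ = if k = k' then 1 else 0 := by
  split_ifs with hk
  · subst hk
    simpa only [sq] using hvar k
  · rw [(hindep hk).integral_fun_mul_eq_mul_integral (mX k) (mX k'), hmean k, zero_mul]

section Orthonormal

variable {κ : Type*} [Fintype κ] {V : Ω → κ → ℝ}

theorem memLp_two_dotProduct (hV : ∀ k, MemLp (fun ω => V ω k) 2 μ) (x : κ → ℝ) :
    MemLp (fun ω => V ω ⬝ᵥ x) 2 μ :=
  memLp_finsetSum _ fun k _ => (hV k).mul_const (x k)

theorem integral_dotProduct_mul_dotProduct [DecidableEq κ]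
    (hV : ∀ k, MemLp (fun ω => V ω k) 2 μ)
    (horth : ∀ k k', ∫ ω, V ω k * V ω k' ∂μ = if k = k' then 1 else 0) (x y : κ → ℝ) :
    ∫ ω, (V ω ⬝ᵥ x) * (V ω ⬝ᵥ y) ∂μ = x ⬝ᵥ y := by
  have hterm (k k' : κ) : Integrable (fun ω => V ω k * V ω k' * (x k * y k')) μ :=
    ((hV k).integrable_mul (hV k')).mul_const _
  calc ∫ ω, (V ω ⬝ᵥ x) * (V ω ⬝ᵥ y) ∂μ
      = ∫ ω, ∑ k, ∑ k', V ω k * V ω k' * (x k * y k') ∂μ := by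
        congr with ω
        simp only [dotProduct, sum_mul_sum]
        exact sum_congr rfl fun k _ => sum_congr rfl fun k' _ => by ring
    _ = ∑ k, ∑ k', (∫ ω, V ω k * V ω k' ∂μ) * (x k * y k') := by
        rw [integral_finsetSum _ fun k _ => integrable_finsetSum _ fun k' _ => hterm k k']
        refine sum_congr rfl fun k _ => ?_
        rw [integral_finsetSum _ fun k' _ => hterm k k']
        exact sum_congr rfl fun k' _ => integral_mul_const _ _
    _ = x ⬝ᵥ y := by simp [horth, dotProduct]

end Orthonormal

section IndependentRows

variable {ι κ : Type*} [Fintype ι] [Fintype κ] {Y : ι → Ω → κ → ℝ}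

theorem integrable_prod_dotProduct_mul_dotProduct (hY : iIndepFun Y μ)
    (mY : ∀ i, Measurable (Y i)) (hL2 : ∀ i k, MemLp (fun ω => Y i ω k) 2 μ) (x y : κ → ℝ) :
    Integrable (fun ω => ∏ i, (Y i ω ⬝ᵥ x) * (Y i ω ⬝ᵥ y)) μ := by
  have hg : Measurable fun v : κ → ℝ => (v ⬝ᵥ x) * (v ⬝ᵥ y) := by
    unfold dotProduct; fun_prop
  simpa only [prod_fn, Function.comp_apply] using
    (hY.comp _ fun _ => hg).integrable_finsetProd (fun i => hg.comp (mY i))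
      (fun i => (memLp_two_dotProduct (hL2 i) x).integrable_mul (memLp_two_dotProduct (hL2 i) y))
      univ

theorem integral_prod_dotProduct_mul_dotProduct [DecidableEq κ] (hY : iIndepFun Y μ)
    (mY : ∀ i, Measurable (Y i)) (hL2 : ∀ i k, MemLp (fun ω => Y i ω k) 2 μ)
    (horth : ∀ i k k', ∫ ω, Y i ω k * Y i ω k' ∂μ = if k = k' then 1 else 0) (x y : κ → ℝ) :
    ∫ ω, ∏ i, (Y i ω ⬝ᵥ x) * (Y i ω ⬝ᵥ y) ∂μ = (x ⬝ᵥ y) ^ Fintype.card ι := by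
  have hg : Measurable fun v : κ → ℝ => (v ⬝ᵥ x) * (v ⬝ᵥ y) := by
    unfold dotProduct; fun_prop
  rw [hY.integral_fun_prod_comp (fun i => (mY i).aemeasurable) fun _ => hg.aestronglyMeasurable]
  simp [integral_dotProduct_mul_dotProduct (hL2 _) (horth _)]

end IndependentRows

end ProbabilityTheory

theorem polynomial_sketch_unbiased_general
    {Ω : Type*} [MeasureSpace Ω] [IsProbabilityMeasure (ℙ : Measure Ω)]
    (n D d : ℕ) (hD : 0 < D)
    (W : Fin n → Ω → Matrix (Fin D) (Fin d) ℝ)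
    (hmeas : ∀ i j k, Measurable fun ω => W i ω j k)
    (hindep : iIndepFun
      (fun p : Fin n × Fin D × Fin d => fun ω => W p.1 ω p.2.1 p.2.2) ℙ)
    (hmean : ∀ i j k, ∫ ω, W i ω j k = 0)
    (hvar : ∀ i j k, ∫ ω, (W i ω j k) ^ 2 = 1)
    (x y : Fin d → ℝ) :
    (∫ ω, (∑ j : Fin D,
        (∏ i : Fin n, ∑ k : Fin d, W i ω j k * x k) *
        (∏ i : Fin n, ∑ k : Fin d, W i ω j k * y k)) / D) =
      (∑ k : Fin d, x k * y k) ^ n := by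
  have hL2 (i j k) : MemLp (fun ω => W i ω j k) 2 ℙ :=
    (memLp_two_iff_integrable_sq (hmeas i j k).aestronglyMeasurable).2
      (Integrable.of_integral_ne_zero (by simp [hvar]))
  have horth (i j) := integral_mul_eq_ite_of_indepFun (X := fun k ω => W i ω j k)
    (fun k k' hk => hindep.indepFun (i := (i, j, k)) (j := (i, j, k')) (by simpa using hk))
    (fun k => (hmeas i j k).aestronglyMeasurable) (hmean i j) (hvar i j)
  have hrow_meas (j i) : Measurable fun ω => W i ω j := measurable_pi_lambda _ (hmeas i j)
  have hrows (j : Fin D) : iIndepFun (fun i ω => W i ω j) ℙ := by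
    refine iIndepFun.curry (X := fun i k ω => W i ω j k) (fun i k => hmeas i j k) ?_
    refine hindep.precomp (g := fun p : Fin n × Fin d => (p.1, j, p.2)) fun p q hpq => ?_
    simp only [Prod.mk.injEq] at hpq
    exact Prod.ext hpq.1 hpq.2.2
  calc (∫ ω, (∑ j : Fin D,
        (∏ i : Fin n, ∑ k : Fin d, W i ω j k * x k) *
        (∏ i : Fin n, ∑ k : Fin d, W i ω j k * y k)) / D)
      = (∑ j : Fin D, ∫ ω, ∏ i, (W i ω j ⬝ᵥ x) * (W i ω j ⬝ᵥ y)) / D := by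
        have hsummand (ω j) : (∏ i, ∑ k, W i ω j k * x k) * (∏ i, ∑ k, W i ω j k * y k) =
            ∏ i, (W i ω j ⬝ᵥ x) * (W i ω j ⬝ᵥ y) := prod_mul_distrib.symm
        simp_rw [hsummand]
        rw [integral_div, integral_finsetSum _ fun j _ =>
          integrable_prod_dotProduct_mul_dotProduct (hrows j) (hrow_meas j) (hL2 · j) x y]
    _ = (x ⬝ᵥ y) ^ n := by
        simp [integral_prod_dotProduct_mul_dotProduct (hrows _) (hrow_meas _) (hL2 · _)
          (horth · _) x y, hD.ne']

/-- unbiasedness of the polynomial sketch. If `W₁,…,Wₙ ∈ ℝ^{D×d}` are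
    random matrices whose entries are (jointly) i.i.d. with mean `0` and variance `1`,
    and `φₙ(x) = (W₁x ⊙ ⋯ ⊙ Wₙx)/√D`, then `E[φₙ(x)ᵀφₙ(y)] = ⟨x,y⟩ⁿ`. -/
theorem polynomial_sketch_unbiased
    {Ω : Type*} [MeasureSpace Ω] [IsProbabilityMeasure (ℙ : Measure Ω)]
    (n D d : ℕ) (hD : 0 < D)
    (W : Fin n → Ω → Matrix (Fin D) (Fin d) ℝ)
    (hmeas : ∀ i j k, Measurable fun ω => W i ω j k)
    (hindep : iIndepFun
      (fun p : Fin n × Fin D × Fin d => fun ω => W p.1 ω p.2.1 p.2.2) ℙ)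
    (hident : ∀ (i i' : Fin n) (j j' : Fin D) (k k' : Fin d),
      Measure.map (fun ω => W i ω j k) ℙ = Measure.map (fun ω => W i' ω j' k') ℙ)
    (hmean : ∀ i j k, ∫ ω, W i ω j k = 0)
    (hvar : ∀ i j k, ∫ ω, (W i ω j k) ^ 2 = 1)
    (x y : Fin d → ℝ) :
    (∫ ω, (∑ j : Fin D,
        (∏ i : Fin n, ∑ k : Fin d, W i ω j k * x k) *
        (∏ i : Fin n, ∑ k : Fin d, W i ω j k * y k)) / D) =
      (∑ k : Fin d, x k * y k) ^ n :=
  polynomial_sketch_unbiased_general n D d hD W hmeas hindep hmean hvar x y
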